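/- If X_1, X_2 are independent copies of a G-valued random variable X and H(X_1+X_2) = H(X_1+X_2 | X_2), then X_1+X_2 is independent of X_2, and consequently range(X) − range(X) is a finite subgroup of G on a coset of which X is uniformly distributed. -/

import Mathlib

open Real
open scoped BigOperators Pointwise Classical

/-- A finitely supported probability space. -/
structure FinProb (Ω : Type*) [Fintype Ω] where
  p : Ω → ℝ
  nonneg : ∀ ω, 0 ≤ p ω
  sum_one : ∑ ω, p ω = 1

/-- Probability that the random variable `X` takes the value `s`. -/
noncomputable def prob {Ω S : Type*} [Fintype Ω] (μ : FinProb Ω) (X : Ω → S) (s : S) : ℝ :=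
  ∑ ω, if X ω = s then μ.p ω else 0

/-- Shannon entropy of a discrete random variable. -/
noncomputable def entropy {Ω S : Type*} [Fintype Ω] (μ : FinProb Ω) (X : Ω → S) : ℝ :=
  ∑ s ∈ Finset.univ.image X, Real.negMulLog (prob μ X s)

/-- Conditional Shannon entropy `H(X|Y) = H(X,Y) - H(Y)`. -/
noncomputable def condEntropy {Ω S T : Type*} [Fintype Ω] (μ : FinProb Ω)
    (X : Ω → S) (Y : Ω → T) : ℝ :=
  entropy μ (fun ω => (X ω, Y ω)) - entropy μ Y

/-- The essential range of a random variable: values attained with positive probability. -/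
noncomputable def rangeF {Ω S : Type*} [Fintype Ω] (μ : FinProb Ω) (X : Ω → S) : Finset S :=
  (Finset.univ.image X).filter (fun s => prob μ X s ≠ 0)

/-- Two random variables (on possibly different spaces) have the same distribution. -/
def IdentDist {Ω Ω' S : Type*} [Fintype Ω] [Fintype Ω'] (μ : FinProb Ω) (X : Ω → S)
    (μ' : FinProb Ω') (Y : Ω' → S) : Prop :=
  ∀ s, prob μ X s = prob μ' Y s

/-- Independence of two random variables. -/
def IndepRV {Ω S T : Type*} [Fintype Ω] (μ : FinProb Ω) (X : Ω → S) (Y : Ω → T) : Prop :=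
  ∀ s t, prob μ (fun ω => (X ω, Y ω)) (s, t) = prob μ X s * prob μ Y t

/-- Joint independence of a finite family of random variables. -/
def IndepFam {Ω ι : Type*} [Fintype Ω] [Fintype ι] {S : ι → Type*}
    (μ : FinProb Ω) (X : ∀ i, Ω → S i) : Prop :=
  ∀ f : ∀ i, S i, prob μ (fun ω i => X i ω) f = ∏ i, prob μ (X i) (f i)

/-- `X` and `Y` are conditionally independent given `W`. -/
def CondIndepGiven {Ω S T U : Type*} [Fintype Ω] (μ : FinProb Ω)
    (X : Ω → S) (Y : Ω → T) (W : Ω → U) : Prop :=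
  ∀ s t u, prob μ (fun ω => (X ω, Y ω, W ω)) (s, t, u) * prob μ W u
    = prob μ (fun ω => (X ω, W ω)) (s, u) * prob μ (fun ω => (Y ω, W ω)) (t, u)

/-- `Y` is determined by `X` (almost surely). -/
def Determines {Ω S T : Type*} [Fintype Ω] (μ : FinProb Ω) (X : Ω → S) (Y : Ω → T) : Prop :=
  ∃ f : S → T, ∀ ω, μ.p ω ≠ 0 → Y ω = f (X ω)

/-- The entropy transport distance between the distributions of `X` and `Y`:
the infimum of `H(Z)` over random variables `Z` (coupled with a copy `X'` of `X`)
such that `X' + Z` is distributed as `Y`. -/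
noncomputable def transDist {Ω₁ Ω₂ G : Type*} [Fintype Ω₁] [Fintype Ω₂] [AddCommGroup G]
    (μ : FinProb Ω₁) (X : Ω₁ → G) (ν : FinProb Ω₂) (Y : Ω₂ → G) : ℝ :=
  sInf {h : ℝ | ∃ (n : ℕ) (μ' : FinProb (Fin n)) (X' Z : Fin n → G),
    IdentDist μ' X' μ X ∧ IdentDist μ' (fun ω => X' ω + Z ω) ν Y ∧ entropy μ' Z = h}

/-- Conditioning a finitely supported probability space on an event `E`
(returning `μ` unchanged if `E` has zero probability). -/
noncomputable def condFinProb {Ω : Type*} [Fintype Ω] (μ : FinProb Ω) (E : Ω → Prop) :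
    FinProb Ω :=
  if h : 0 < ∑ ω, if E ω then μ.p ω else 0 then
    { p := fun ω => if E ω then μ.p ω / (∑ ω', if E ω' then μ.p ω' else 0) else 0
      nonneg := fun ω => by
        split
        · exact div_nonneg (μ.nonneg ω) h.le
        · exact le_refl 0
      sum_one := by
        have h' : ∀ ω, (if E ω then μ.p ω / (∑ ω', if E ω' then μ.p ω' else 0) else 0)
            = (if E ω then μ.p ω else 0) / (∑ ω', if E ω' then μ.p ω' else 0) := by
          intro ω; split <;> simp
        rw [Finset.sum_congr rfl (fun ω _ => h' ω), ← Finset.sum_div, div_self h.ne'] }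
  else μ

/-!
The hypothesis says that the mutual information of `X₁ + X₂` and `X₂`, which is the
Kullback–Leibler divergence of their joint law from the product of the marginals, vanishes; the
equality case of Gibbs' inequality turns this into independence. Independence of `X₁ + X₂` and
`X₂`, together with that of `X₁` and `X₂`, gives `p (s - t) = P(X₁ + X₂ = s)` whenever
`p t ≠ 0`, where `p` is the law of `X`. Hence `p` is invariant under translation by `R - R`,
`R` its support, so `R + (R - R) ⊆ R`: this makes `R - R` a subgroup, `R` one of its cosets,
and `p` constant on `R`.
-/

open InformationTheory

theorem eq_of_sum_mul_log_div_eq_zero {ι : Type*} {A : Finset ι} {p q : ι → ℝ}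
    (hp : ∀ i ∈ A, 0 ≤ p i) (hq : ∀ i ∈ A, 0 ≤ q i) (hpq : ∀ i ∈ A, q i = 0 → p i = 0)
    (hsum : ∑ i ∈ A, p i = ∑ i ∈ A, q i) (hkl : ∑ i ∈ A, p i * log (p i / q i) = 0) :
    ∀ i ∈ A, p i = q i := by
  have hterm : ∀ i ∈ A, q i * klFun (p i / q i) = p i * log (p i / q i) + q i - p i := by
    intro i hi
    rcases (hq i hi).eq_or_lt with h0 | h0
    · simp [← h0, hpq i hi h0.symm]
    · rw [klFun_apply]
      field_simp
  have hzero : ∑ i ∈ A, q i * klFun (p i / q i) = 0 := by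
    rw [Finset.sum_congr rfl hterm, Finset.sum_sub_distrib, Finset.sum_add_distrib, hkl, hsum]
    ring
  have hnonneg : ∀ i ∈ A, 0 ≤ q i * klFun (p i / q i) := fun i hi =>
    mul_nonneg (hq i hi) (klFun_nonneg (div_nonneg (hp i hi) (hq i hi)))
  intro i hi
  rcases (hq i hi).eq_or_lt with h0 | h0
  · rw [← h0, hpq i hi h0.symm]
  · have hkl0 := (mul_eq_zero.1
      ((Finset.sum_eq_zero_iff_of_nonneg hnonneg).1 hzero i hi)).resolve_left h0.ne'
    exact (div_eq_one_iff_eq h0.ne').1 ((klFun_eq_zero_iff (div_nonneg (hp i hi) h0.le)).1 hkl0)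

section FinProb

variable {Ω S T : Type*} [Fintype Ω] (μ : FinProb Ω)

theorem prob_nonneg (X : Ω → S) (s : S) : 0 ≤ prob μ X s :=
  Finset.sum_nonneg fun ω _ => ite_nonneg (μ.nonneg ω) le_rfl

theorem prob_eq_zero_of_notMem_image {X : Ω → S} {s : S} (h : s ∉ Finset.univ.image X) :
    prob μ X s = 0 := by
  simp only [Finset.mem_image, Finset.mem_univ, true_and, not_exists] at h
  simp [prob, h]

theorem sum_prob_eq_one {X : Ω → S} {A : Finset S} (hA : ∀ ω, X ω ∈ A) :
    ∑ s ∈ A, prob μ X s = 1 := by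
  simp only [prob]
  rw [Finset.sum_comm]
  simp [hA, μ.sum_one]

theorem sum_prob_pair_left {X : Ω → S} {Y : Ω → T} {B : Finset T} (hB : ∀ ω, Y ω ∈ B) (s : S) :
    ∑ t ∈ B, prob μ (fun ω => (X ω, Y ω)) (s, t) = prob μ X s := by
  simp only [prob]
  rw [Finset.sum_comm]
  refine Finset.sum_congr rfl fun ω _ => ?_
  by_cases hX : X ω = s <;> simp [hX, hB]

theorem sum_prob_pair_right {X : Ω → S} {Y : Ω → T} {A : Finset S} (hA : ∀ ω, X ω ∈ A) (t : T) :
    ∑ s ∈ A, prob μ (fun ω => (X ω, Y ω)) (s, t) = prob μ Y t := by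
  simp only [prob]
  rw [Finset.sum_comm]
  refine Finset.sum_congr rfl fun ω _ => ?_
  by_cases hY : Y ω = t <;> simp [hY, hA]

theorem prob_pair_le_left (X : Ω → S) (Y : Ω → T) (s : S) (t : T) :
    prob μ (fun ω => (X ω, Y ω)) (s, t) ≤ prob μ X s :=
  Finset.sum_le_sum fun ω _ => by
    by_cases hX : X ω = s <;> by_cases hY : Y ω = t <;> simp [hX, hY, μ.nonneg ω]

theorem prob_pair_le_right (X : Ω → S) (Y : Ω → T) (s : S) (t : T) :
    prob μ (fun ω => (X ω, Y ω)) (s, t) ≤ prob μ Y t :=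
  Finset.sum_le_sum fun ω _ => by
    by_cases hX : X ω = s <;> by_cases hY : Y ω = t <;> simp [hX, hY, μ.nonneg ω]

theorem entropy_eq_sum {X : Ω → S} {A : Finset S} (hA : ∀ ω, X ω ∈ A) :
    entropy μ X = ∑ s ∈ A, negMulLog (prob μ X s) := by
  refine Finset.sum_subset (Finset.image_subset_iff.2 fun ω _ => hA ω) fun s _ hs => ?_
  rw [prob_eq_zero_of_notMem_image μ hs, negMulLog_zero]

theorem mem_rangeF {X : Ω → S} {s : S} : s ∈ rangeF μ X ↔ prob μ X s ≠ 0 := by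
  refine ⟨fun hs => (Finset.mem_filter.1 hs).2, fun hs => Finset.mem_filter.2 ⟨?_, hs⟩⟩
  by_contra hX
  exact hs (prob_eq_zero_of_notMem_image μ hX)

theorem sum_prob_rangeF (X : Ω → S) : ∑ s ∈ rangeF μ X, prob μ X s = 1 := by
  rw [rangeF, Finset.sum_filter_ne_zero]
  exact sum_prob_eq_one μ fun ω => Finset.mem_image_of_mem X (Finset.mem_univ ω)

theorem rangeF_nonempty (X : Ω → S) : (rangeF μ X).Nonempty :=
  Finset.nonempty_of_sum_ne_zero (by rw [sum_prob_rangeF]; exact one_ne_zero)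

theorem prob_eq_inv_card_rangeF {X : Ω → S}
    (hconst : ∀ x ∈ rangeF μ X, ∀ y ∈ rangeF μ X, prob μ X x = prob μ X y)
    {x : S} (hx : x ∈ rangeF μ X) : prob μ X x = ((rangeF μ X).card : ℝ)⁻¹ := by
  refine eq_inv_of_mul_eq_one_right ?_
  rw [← sum_prob_rangeF μ X, ← nsmul_eq_mul, ← Finset.sum_const]
  exact Finset.sum_congr rfl fun y hy => hconst x hx y hy

theorem entropy_add_entropy_sub_entropy_pair (X : Ω → S) (Y : Ω → T) :
    entropy μ X + entropy μ Y - entropy μ (fun ω => (X ω, Y ω)) =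
      ∑ z ∈ Finset.univ.image X ×ˢ Finset.univ.image Y,
        prob μ (fun ω => (X ω, Y ω)) z *
          log (prob μ (fun ω => (X ω, Y ω)) z / (prob μ X z.1 * prob μ Y z.2)) := by
  set pXY := prob μ (fun ω => (X ω, Y ω))
  have hA : ∀ ω, X ω ∈ Finset.univ.image X := fun ω => Finset.mem_image_of_mem X (Finset.mem_univ ω)
  have hB : ∀ ω, Y ω ∈ Finset.univ.image Y := fun ω => Finset.mem_image_of_mem Y (Finset.mem_univ ω)
  have hX : entropy μ X = -∑ z ∈ Finset.univ.image X ×ˢ Finset.univ.image Y,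
      pXY z * log (prob μ X z.1) := by
    rw [entropy_eq_sum μ hA, Finset.sum_product, ← Finset.sum_neg_distrib]
    refine Finset.sum_congr rfl fun s _ => ?_
    dsimp only
    rw [← Finset.sum_mul, sum_prob_pair_left μ hB, negMulLog, neg_mul]
  have hY : entropy μ Y = -∑ z ∈ Finset.univ.image X ×ˢ Finset.univ.image Y,
      pXY z * log (prob μ Y z.2) := by
    rw [entropy_eq_sum μ hB, Finset.sum_product_right, ← Finset.sum_neg_distrib]
    refine Finset.sum_congr rfl fun t _ => ?_
    dsimp only
    rw [← Finset.sum_mul, sum_prob_pair_right μ hA, negMulLog, neg_mul]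
  have hXY : entropy μ (fun ω => (X ω, Y ω)) =
      -∑ z ∈ Finset.univ.image X ×ˢ Finset.univ.image Y, pXY z * log (pXY z) := by
    rw [entropy_eq_sum μ fun ω => Finset.mem_product.2 ⟨hA ω, hB ω⟩, ← Finset.sum_neg_distrib]
    simp only [negMulLog, neg_mul]
    rfl
  have hterm : ∀ z ∈ Finset.univ.image X ×ˢ Finset.univ.image Y,
      pXY z * log (pXY z / (prob μ X z.1 * prob μ Y z.2)) =
        pXY z * log (pXY z) - pXY z * log (prob μ X z.1) - pXY z * log (prob μ Y z.2) := by
    rintro ⟨s, t⟩ -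
    rcases (show 0 ≤ pXY (s, t) from prob_nonneg μ _ _).eq_or_lt with h0 | h0
    · simp [← h0]
    · have hs := h0.trans_le (prob_pair_le_left μ X Y s t)
      have ht := h0.trans_le (prob_pair_le_right μ X Y s t)
      rw [log_div h0.ne' (mul_pos hs ht).ne', log_mul hs.ne' ht.ne']
      ring
  rw [Finset.sum_congr rfl hterm, Finset.sum_sub_distrib, Finset.sum_sub_distrib, hX, hY, hXY]
  ring

theorem indepRV_of_entropy_pair_eq_add {X : Ω → S} {Y : Ω → T}
    (h : entropy μ (fun ω => (X ω, Y ω)) = entropy μ X + entropy μ Y) : IndepRV μ X Y := by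
  have hA : ∀ ω, X ω ∈ Finset.univ.image X := fun ω => Finset.mem_image_of_mem X (Finset.mem_univ ω)
  have hB : ∀ ω, Y ω ∈ Finset.univ.image Y := fun ω => Finset.mem_image_of_mem Y (Finset.mem_univ ω)
  have hpair_eq_zero : ∀ s t, prob μ X s * prob μ Y t = 0 →
      prob μ (fun ω => (X ω, Y ω)) (s, t) = 0 := fun s t hst =>
    (prob_nonneg μ _ _).antisymm' <| by
      rcases mul_eq_zero.1 hst with h0 | h0
      · exact h0 ▸ prob_pair_le_left μ X Y s t
      · exact h0 ▸ prob_pair_le_right μ X Y s t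
  have hgibbs := eq_of_sum_mul_log_div_eq_zero (A := Finset.univ.image X ×ˢ Finset.univ.image Y)
    (p := prob μ (fun ω => (X ω, Y ω))) (q := fun z => prob μ X z.1 * prob μ Y z.2)
    (fun z _ => prob_nonneg μ _ z)
    (fun z _ => mul_nonneg (prob_nonneg μ X z.1) (prob_nonneg μ Y z.2))
    (fun z _ => hpair_eq_zero z.1 z.2)
    (by rw [sum_prob_eq_one μ fun ω => Finset.mem_product.2 ⟨hA ω, hB ω⟩, Finset.sum_product,
      ← Finset.sum_mul_sum, sum_prob_eq_one μ hA, sum_prob_eq_one μ hB, one_mul])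
    (by rw [← entropy_add_entropy_sub_entropy_pair, h, sub_self])
  intro s t
  by_cases hst : s ∈ Finset.univ.image X ∧ t ∈ Finset.univ.image Y
  · exact hgibbs (s, t) (Finset.mem_product.2 hst)
  · have hprod : prob μ X s * prob μ Y t = 0 := by
      rw [not_and_or] at hst
      exact mul_eq_zero.2
        (hst.imp (prob_eq_zero_of_notMem_image μ) (prob_eq_zero_of_notMem_image μ))
    rw [hpair_eq_zero s t hprod, hprod]

variable {G : Type*} [AddCommGroup G]

theorem prob_add_pair (X Y : Ω → G) (s t : G) :
    prob μ (fun ω => (X ω + Y ω, Y ω)) (s, t) = prob μ (fun ω => (X ω, Y ω)) (s - t, t) :=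
  Finset.sum_congr rfl fun ω _ => by
    by_cases hY : Y ω = t <;> simp [hY, eq_sub_iff_add_eq]

theorem prob_sub_eq_prob_add_of_indepRV {X Y : Ω → G} (hXY : IndepRV μ X Y)
    (hSY : IndepRV μ (fun ω => X ω + Y ω) Y) {t : G} (ht : prob μ Y t ≠ 0) (s : G) :
    prob μ X (s - t) = prob μ (fun ω => X ω + Y ω) s :=
  mul_right_cancel₀ ht (by rw [← hXY, ← prob_add_pair, hSY])

theorem prob_add_sub_eq_of_indepRV {X Y : Ω → G} (hXY : IndepRV μ X Y)
    (hSY : IndepRV μ (fun ω => X ω + Y ω) Y) {x y : G} (hx : prob μ Y x ≠ 0)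
    (hy : prob μ Y y ≠ 0) (g : G) : prob μ X (g + (x - y)) = prob μ X g :=
  calc prob μ X (g + (x - y)) = prob μ X (g + x - y) := by rw [add_sub_assoc]
    _ = prob μ X (g + x - x) := by
      rw [prob_sub_eq_prob_add_of_indepRV μ hXY hSY hy,
        prob_sub_eq_prob_add_of_indepRV μ hXY hSY hx]
    _ = prob μ X g := by rw [add_sub_cancel_right]

end FinProb

theorem Set.exists_addSubgroup_of_add_sub_self_subset {G : Type*} [AddCommGroup G] {R : Set G}
    {c : G} (hc : c ∈ R) (hR : R + (R - R) ⊆ R) :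
    ∃ H : AddSubgroup G, R - R = H ∧ R = c +ᵥ (H : Set G) := by
  have hcD : ∀ {d}, d ∈ R - R → c + d ∈ R := fun hd => hR (Set.add_mem_add hc hd)
  refine ⟨{ carrier := R - R, add_mem' := ?_, zero_mem' := ?_, neg_mem' := ?_ }, rfl, ?_⟩
  · intro a b ha hb
    exact ⟨c + a + b, hR (Set.add_mem_add (hcD ha) hb), c, hc, by simp [add_assoc]⟩
  · exact ⟨c, hc, c, hc, sub_self c⟩
  · rintro _ ⟨x, hx, y, hy, rfl⟩
    exact ⟨y, hy, x, hx, (neg_sub x y).symm⟩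
  · ext g
    refine ⟨fun hg => ⟨g - c, ⟨g, hg, c, hc, rfl⟩, add_sub_cancel c g⟩, ?_⟩
    rintro ⟨d, hd, rfl⟩
    exact hcD hd

theorem exists_addSubgroup_uniform_of_prob_add_eq {Ω G : Type*} [Fintype Ω] [AddCommGroup G]
    (μ : FinProb Ω) (X : Ω → G)
    (hinv : ∀ g, ∀ d ∈ rangeF μ X - rangeF μ X, prob μ X (g + d) = prob μ X g) :
    ∃ (H : AddSubgroup G) (c : G),
      ((rangeF μ X - rangeF μ X : Finset G) : Set G) = (H : Set G) ∧
      ∀ g : G, prob μ X g =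
        if g ∈ c +ᵥ (H : Set G) then (((rangeF μ X - rangeF μ X).card : ℝ))⁻¹ else 0 := by
  set R := rangeF μ X
  obtain ⟨c, hc⟩ := rangeF_nonempty μ X
  have hRD : (R : Set G) + ((R : Set G) - R) ⊆ R := by
    rintro _ ⟨r, hr, d, hd, rfl⟩
    rw [← Finset.coe_sub] at hd
    rw [Finset.mem_coe, mem_rangeF, hinv r d hd]
    exact (mem_rangeF μ).1 hr
  obtain ⟨H, hH, hcoset⟩ := Set.exists_addSubgroup_of_add_sub_self_subset hc hRD
  rw [← Finset.coe_sub] at hH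
  have hRvadd : R = c +ᵥ (R - R) := Finset.coe_inj.1 (by rw [Finset.coe_vadd_finset, hH, hcoset])
  have hcard : R.card = (R - R).card := by
    nth_rw 1 [hRvadd]
    exact Finset.card_vadd_finset c _
  have hconst : ∀ x ∈ R, ∀ y ∈ R, prob μ X x = prob μ X y := fun x hx y hy => by
    simpa using hinv y (x - y) (Finset.sub_mem_sub hx hy)
  refine ⟨H, c, hH, fun g => ?_⟩
  rw [← hcoset, Finset.mem_coe, ← hcard]
  split_ifs with hg
  · exact prob_eq_inv_card_rangeF μ hconst hg
  · exact not_not.1 (mt (mem_rangeF μ).2 hg)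

/-- if `X₁, X₂` are independent copies of `X` and
`H(X₁+X₂) = H(X₁+X₂ | X₂)`, then `X₁+X₂` is independent of `X₂`, and
`range(X) − range(X)` is a finite subgroup of `G` on a coset of which `X` is uniformly
distributed. -/
theorem indep_and_uniform_of_entropy_eq_condEntropy {G Ω Ω' : Type*} [AddCommGroup G]
    [Fintype Ω] [Fintype Ω'] (μ : FinProb Ω) (X : Ω → G)
    (μ' : FinProb Ω') (X₁ X₂ : Ω' → G)
    (h₁ : IdentDist μ' X₁ μ X) (h₂ : IdentDist μ' X₂ μ X) (hindep : IndepRV μ' X₁ X₂)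
    (hent : entropy μ' (fun ω => X₁ ω + X₂ ω)
      = condEntropy μ' (fun ω => X₁ ω + X₂ ω) X₂) :
    IndepRV μ' (fun ω => X₁ ω + X₂ ω) X₂ ∧
    ∃ (H : AddSubgroup G) (c : G),
      ((rangeF μ X - rangeF μ X : Finset G) : Set G) = (H : Set G) ∧
      ∀ g : G, prob μ X g =
        if g ∈ c +ᵥ (H : Set G) then (((rangeF μ X - rangeF μ X).card : ℝ))⁻¹ else 0 := by
  have hSind : IndepRV μ' (fun ω => X₁ ω + X₂ ω) X₂ :=
    indepRV_of_entropy_pair_eq_add μ' (by rw [condEntropy] at hent; linarith)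
  refine ⟨hSind, exists_addSubgroup_uniform_of_prob_add_eq μ X fun g d hd => ?_⟩
  obtain ⟨x, hx, y, hy, rfl⟩ := Finset.mem_sub.1 hd
  rw [mem_rangeF, ← h₂] at hx hy
  rw [← h₁, ← h₁]
  exact prob_add_sub_eq_of_indepRV μ' hindep hSind hx hy g
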